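/- Any submodular deterministic two-item menu (a,b,c) (i.e., with max(a,b) ≤ c ≤ a+b) is revenue monotone: if (v1', v2') ≤ (v1, v2) coordinatewise, then the payment made by a buyer with values (v1,v2) is at least the payment made by a buyer with values (v1',v2'). -/

import Mathlib

/-!
Let `v' ≤ v`. If the buyer at `v'` buys item 1 alone, then `a ≤ v₁' ≤ v₁`; at `v`, item 1 alone
beats buying nothing, and submodularity `c - b ≤ a` makes the pair beat item 2 alone, so the buyer
at `v` buys item 1 or the pair, and pays at least `a` as `a ≤ c`. Item 2 is symmetric. If the
buyer at `v'` buys the pair, the conditions for the pair to be optimal, `c ≤ v₁ + v₂`,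
`c - b ≤ v₁` and `c - a ≤ v₂`, are upward closed, so the buyer at `v` buys the pair too.
-/

open MeasureTheory

/-- Payment made by a utility-maximizing additive buyer with values `(v1, v2)` facing the
deterministic menu charging `a` for item 1, `b` for item 2, `c` for the pair;
ties are broken in favor of the higher payment. -/
noncomputable def pay (a b c v1 v2 : ℝ) : ℝ :=
  let u1 := v1 - a
  let u2 := v2 - b
  let u12 := v1 + v2 - c
  let m := max (max 0 u1) (max u2 u12)
  max (if u1 = m then a else 0) (max (if u2 = m then b else 0) (if u12 = m then c else 0))

/-- Expected revenue of the menu `(a, b, c)` when values are drawn from `μ`. -/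
noncomputable def rev (μ : Measure (ℝ × ℝ)) (a b c : ℝ) : ℝ :=
  ∫ v, pay a b c v.1 v.2 ∂μ

noncomputable def maxUtility (a b c v1 v2 : ℝ) : ℝ :=
  max (max 0 (v1 - a)) (max (v2 - b) (v1 + v2 - c))

section Menu

variable {a b c v1 v2 : ℝ}

lemma pay_eq (a b c v1 v2 : ℝ) : pay a b c v1 v2 =
    max (if v1 - a = maxUtility a b c v1 v2 then a else 0)
      (max (if v2 - b = maxUtility a b c v1 v2 then b else 0)
        (if v1 + v2 - c = maxUtility a b c v1 v2 then c else 0)) :=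
  rfl

lemma maxUtility_comm (a b c v1 v2 : ℝ) : maxUtility b a c v2 v1 = maxUtility a b c v1 v2 := by
  rw [maxUtility, maxUtility, add_comm v2 v1, max_assoc, max_left_comm (v2 - b), ← max_assoc]

lemma pay_comm (a b c v1 v2 : ℝ) : pay b a c v2 v1 = pay a b c v1 v2 := by
  rw [pay_eq, pay_eq, maxUtility_comm, add_comm v2 v1, max_left_comm]

lemma zero_le_maxUtility (a b c v1 v2 : ℝ) : 0 ≤ maxUtility a b c v1 v2 :=
  (le_max_left _ _).trans (le_max_left _ _)

lemma eq_maxUtility_both_iff :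
    v1 + v2 - c = maxUtility a b c v1 v2 ↔ c ≤ v1 + v2 ∧ c - b ≤ v1 ∧ c - a ≤ v2 := by
  constructor
  · intro h
    have h0 : 0 ≤ v1 + v2 - c := h ▸ zero_le_maxUtility a b c v1 v2
    have h1 : v1 - a ≤ v1 + v2 - c := h ▸ (le_max_right _ _).trans (le_max_left _ _)
    have h2 : v2 - b ≤ v1 + v2 - c := h ▸ (le_max_left _ _).trans (le_max_right _ _)
    exact ⟨by linarith, by linarith, by linarith⟩
  · rintro ⟨h0, h1, h2⟩
    refine le_antisymm ((le_max_right _ _).trans (le_max_right _ _)) ?_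
    exact max_le (max_le (by linarith) (by linarith)) (max_le (by linarith) le_rfl)

lemma le_pay_of_eq_maxUtility_one (h : v1 - a = maxUtility a b c v1 v2) :
    a ≤ pay a b c v1 v2 := by
  rw [pay_eq, if_pos h]
  exact le_max_left _ _

lemma le_pay_of_eq_maxUtility_both (h : v1 + v2 - c = maxUtility a b c v1 v2) :
    c ≤ pay a b c v1 v2 := by
  rw [pay_eq, if_pos h]
  exact (le_max_right _ _).trans (le_max_right _ _)

lemma pay_nonneg (ha : 0 ≤ a) : 0 ≤ pay a b c v1 v2 := by
  rw [pay_eq]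
  exact le_max_of_le_left (by split_ifs <;> linarith)

lemma pay_le_of_forall_eq_maxUtility {p : ℝ} (h0 : 0 ≤ p)
    (h1 : v1 - a = maxUtility a b c v1 v2 → a ≤ p)
    (h2 : v2 - b = maxUtility a b c v1 v2 → b ≤ p)
    (h12 : v1 + v2 - c = maxUtility a b c v1 v2 → c ≤ p) :
    pay a b c v1 v2 ≤ p := by
  rw [pay_eq]
  refine max_le ?_ (max_le ?_ ?_) <;> split_ifs with h
  exacts [h1 h, h0, h2 h, h0, h12 h, h0]

lemma le_pay_of_le_value_one (hac : a ≤ c) (hsub : c ≤ a + b) (h : a ≤ v1) :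
    a ≤ pay a b c v1 v2 := by
  have hopt : maxUtility a b c v1 v2 = max (v1 - a) (v1 + v2 - c) := by
    rw [maxUtility, max_eq_right (by linarith : (0 : ℝ) ≤ v1 - a),
      max_eq_right (by linarith : v2 - b ≤ v1 + v2 - c)]
  rcases max_choice (v1 - a) (v1 + v2 - c) with hone | hboth
  · exact le_pay_of_eq_maxUtility_one (hopt.trans hone).symm
  · exact hac.trans (le_pay_of_eq_maxUtility_both (hopt.trans hboth).symm)

lemma le_pay_of_le_value_two (hbc : b ≤ c) (hsub : c ≤ a + b) (h : b ≤ v2) :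
    b ≤ pay a b c v1 v2 := by
  rw [← pay_comm]
  exact le_pay_of_le_value_one hbc (by linarith) h

end Menu

theorem stmt3_general (a b c : ℝ) (hmax : max a b ≤ c) (hsub : c ≤ a + b)
    (v1 v2 v1' v2' : ℝ) (h1 : v1' ≤ v1) (h2 : v2' ≤ v2) :
    pay a b c v1' v2' ≤ pay a b c v1 v2 := by
  obtain ⟨hac, hbc⟩ := max_le_iff.mp hmax
  apply pay_le_of_forall_eq_maxUtility (pay_nonneg (by linarith))
  · intro hone
    have : 0 ≤ v1' - a := hone ▸ zero_le_maxUtility a b c v1' v2'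
    exact le_pay_of_le_value_one hac hsub (by linarith)
  · intro htwo
    have : 0 ≤ v2' - b := htwo ▸ zero_le_maxUtility a b c v1' v2'
    exact le_pay_of_le_value_two hbc hsub (by linarith)
  · intro hboth
    obtain ⟨hC, hA, hB⟩ := eq_maxUtility_both_iff.mp hboth
    exact le_pay_of_eq_maxUtility_both
      (eq_maxUtility_both_iff.mpr ⟨by linarith, by linarith, by linarith⟩)

theorem stmt3 (a b c : ℝ) (ha : 0 ≤ a) (hb : 0 ≤ b) (hmax : max a b ≤ c) (hsub : c ≤ a + b)
    (v1 v2 v1' v2' : ℝ) (h1' : 0 ≤ v1') (h2' : 0 ≤ v2') (h1 : v1' ≤ v1) (h2 : v2' ≤ v2) :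
    pay a b c v1' v2' ≤ pay a b c v1 v2 :=
  stmt3_general a b c hmax hsub v1 v2 v1' v2' h1 h2
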